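/- Fix integers q ≥ 1 and 0 ≤ r < s, and define b_k^±(q,r,s;x) = B_k((x+r)/q) ± B_k((x+s)/q). Then for every n ≥ 0 the Hankel determinant det_{0≤i,j≤n}(b_{i+j}^±(q,r,s;x)) is independent of x (it is a constant polynomial in x). -/
import Mathlib

open Finset Polynomial Matrix



lemma iterate_derivative_bernoulli' (n k : ℕ) :
    (Polynomial.derivative)^[k] (Polynomial.bernoulli n)
      = (n.descFactorial k : ℚ) • Polynomial.bernoulli (n - k) := by
  induction k with
  | zero => simp
  | succ k ih =>
      rw [Function.iterate_succ_apply', ih, derivative_smul, derivative_bernoulli,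
        Nat.descFactorial_succ, ← Nat.sub_sub]
      rw [smul_eq_C_mul, smul_eq_C_mul]
      push_cast
      rw [← C_eq_natCast, C_mul]
      ring

lemma hasseDeriv_bernoulli' (n k : ℕ) :
    Polynomial.hasseDeriv k (Polynomial.bernoulli n)
      = (n.choose k : ℚ) • Polynomial.bernoulli (n - k) := by
  have h := congrFun (Polynomial.factorial_smul_hasseDeriv (R := ℚ) k) (Polynomial.bernoulli n)
  rw [iterate_derivative_bernoulli', Nat.descFactorial_eq_factorial_mul_choose] at h
  have h2 : (k.factorial : ℚ) • Polynomial.hasseDeriv k (Polynomial.bernoulli n)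
      = (k.factorial : ℚ) • ((n.choose k : ℚ) • Polynomial.bernoulli (n - k)) := by
    rw [smul_smul]
    simpa [Nat.cast_smul_eq_nsmul, Nat.cast_mul, mul_smul] using h
  have hk : (k.factorial : ℚ) ≠ 0 := by exact_mod_cast k.factorial_ne_zero
  exact smul_right_injective ℚ[X] hk h2

lemma natDegree_bernoulli_le (n : ℕ) : (Polynomial.bernoulli n).natDegree ≤ n := by
  rw [Polynomial.bernoulli]
  apply Polynomial.natDegree_sum_le_of_forall_le
  intro i hi
  exact (Polynomial.natDegree_monomial_le _).trans (Nat.sub_le _ _)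

lemma bernoulli_eval_add' (n : ℕ) (u v : ℚ) :
    (Polynomial.bernoulli n).eval (v + u)
      = ∑ m ∈ range (n + 1), (n.choose m : ℚ) * (Polynomial.bernoulli (n - m)).eval u * v ^ m := by
  rw [← Polynomial.taylor_eval u (Polynomial.bernoulli n) v,
    Polynomial.eval_eq_sum_range' (n := n + 1)
      (lt_of_le_of_lt (le_of_eq_of_le (Polynomial.natDegree_taylor _ _) (natDegree_bernoulli_le n))
        n.lt_succ_self)]
  refine Finset.sum_congr rfl fun m hm => ?_
  rw [Polynomial.taylor_coeff, hasseDeriv_bernoulli', Polynomial.eval_smul, smul_eq_mul]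

lemma bernoulli_eval_add (n : ℕ) (u v : ℚ) :
    (Polynomial.bernoulli n).eval (u + v)
      = ∑ k ∈ range (n + 1), (n.choose k : ℚ) * (Polynomial.bernoulli k).eval u * v ^ (n - k) := by
  rw [show u + v = v + u from add_comm u v, bernoulli_eval_add', ← Finset.sum_range_reflect]
  refine Finset.sum_congr rfl fun k hk => ?_
  rw [Finset.mem_range, Nat.lt_succ_iff] at hk
  rw [Nat.add_sub_cancel, Nat.choose_symm hk, Nat.sub_sub_self hk]


lemma triangle_swap {M : Type*} [AddCommMonoid M] (N : ℕ) (G : ℕ → ℕ → M) :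
    ∑ m ∈ range N, ∑ a ∈ range (m + 1), G a (m - a)
      = ∑ a ∈ range N, ∑ b ∈ range (N - a), G a b := by
  rw [Finset.sum_sigma', Finset.sum_sigma']
  refine Finset.sum_nbij'
    ((fun x => ⟨x.2, x.1 - x.2⟩ : (Σ _ : ℕ, ℕ) → (Σ _ : ℕ, ℕ)))
    ((fun x => ⟨x.1 + x.2, x.1⟩ : (Σ _ : ℕ, ℕ) → (Σ _ : ℕ, ℕ))) ?_ ?_ ?_ ?_ ?_
  · rintro ⟨m, a⟩ hx
    simp only [Finset.mem_sigma, Finset.mem_range] at hx ⊢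
    omega
  · rintro ⟨a, b⟩ hx
    simp only [Finset.mem_sigma, Finset.mem_range] at hx ⊢
    omega
  · rintro ⟨m, a⟩ hx
    simp only [Finset.mem_sigma, Finset.mem_range] at hx
    refine Sigma.ext ?_ (heq_of_eq rfl)
    show a + (m - a) = m
    omega
  · rintro ⟨a, b⟩ hx
    refine Sigma.ext rfl (heq_of_eq ?_)
    show a + b - a = b
    omega
  · rintro ⟨m, a⟩ hx
    rfl

lemma vandermonde_q (i j m : ℕ) :
    ((i + j).choose m : ℚ) = ∑ a ∈ range (m + 1), (i.choose a : ℚ) * (j.choose (m - a)) := by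
  rw [Nat.add_choose_eq, Finset.Nat.sum_antidiagonal_eq_sum_range_succ_mk]
  push_cast
  rfl

lemma core_sum (d : ℕ → ℚ) (t : ℚ) (i j N : ℕ) (hi : i ≤ N) (hj : j ≤ N) :
    ∑ m ∈ range (i + j + 1), ((i + j).choose m : ℚ) * d m * t ^ (i + j - m)
      = ∑ a ∈ range (N + 1), ∑ b ∈ range (N + 1),
          (i.choose a : ℚ) * t ^ (i - a) * ((j.choose b : ℚ) * t ^ (j - b)) * d (a + b) := by
  set F : ℕ → ℕ → ℚ :=
    fun a b => (i.choose a : ℚ) * t ^ (i - a) * ((j.choose b : ℚ) * t ^ (j - b)) * d (a + b)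
    with hF
  have h0 : ∀ a b : ℕ, i < a ∨ j < b → F a b = 0 := by
    rintro a b (h | h) <;> simp [hF, Nat.choose_eq_zero_of_lt h]
  have rect : ∀ A B : ℕ, i ≤ A → j ≤ B →
      (∑ a ∈ range (A + 1), ∑ b ∈ range (B + 1), F a b)
        = ∑ a ∈ range (i + 1), ∑ b ∈ range (j + 1), F a b := by
    intro A B hA hB
    rw [← Finset.sum_subset (Finset.range_subset_range.2 (by omega) :
        range (i + 1) ⊆ range (A + 1))]
    · refine Finset.sum_congr rfl fun a ha => ?_
      rw [← Finset.sum_subset (Finset.range_subset_range.2 (by omega) :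
          range (j + 1) ⊆ range (B + 1))]
      intro b hb hb'
      exact h0 a b (Or.inr (by simp only [Finset.mem_range] at hb hb'; omega))
    · intro a ha ha'
      refine Finset.sum_eq_zero fun b hb => h0 a b (Or.inl ?_)
      simp only [Finset.mem_range] at ha ha'
      omega
  -- LHS to triangle form
  have lhs_eq : ∑ m ∈ range (i + j + 1), ((i + j).choose m : ℚ) * d m * t ^ (i + j - m)
      = ∑ m ∈ range (i + j + 1), ∑ a ∈ range (m + 1), F a (m - a) := by
    refine Finset.sum_congr rfl fun m hm => ?_
    rw [Finset.mem_range, Nat.lt_succ_iff] at hm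
    rw [vandermonde_q, Finset.sum_mul, Finset.sum_mul]
    refine Finset.sum_congr rfl fun a ha => ?_
    rw [Finset.mem_range, Nat.lt_succ_iff] at ha
    by_cases hai : a ≤ i
    · by_cases hbj : m - a ≤ j
      · have he : i - a + (j - (m - a)) = i + j - m := by omega
        have hab : a + (m - a) = m := by omega
        rw [hF]
        simp only []
        rw [hab, ← he, pow_add]
        ring
      · rw [h0 a (m - a) (Or.inr (by omega)),
          Nat.choose_eq_zero_of_lt (by omega : j < m - a)]
        push_cast
        ring
    · rw [h0 a (m - a) (Or.inl (by omega)),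
        Nat.choose_eq_zero_of_lt (by omega : i < a)]
      push_cast
      ring
  rw [lhs_eq, triangle_swap, rect N N hi hj]
  have : ∀ a ∈ range (i + j + 1), ∑ b ∈ range (i + j + 1 - a), F a b
      = ∑ b ∈ range (j + 1), F a b := by
    intro a ha
    by_cases hai : a ≤ i
    · rw [← Finset.sum_subset (Finset.range_subset_range.2 (by omega) :
        range (j + 1) ⊆ range (i + j + 1 - a))]
      intro b hb hb'
      exact h0 a b (Or.inr (by simp only [Finset.mem_range] at hb hb'; omega))
    · rw [Finset.sum_eq_zero fun b _ => h0 a b (Or.inl (by omega)),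
        Finset.sum_eq_zero fun b _ => h0 a b (Or.inl (by omega))]
  rw [Finset.sum_congr rfl this]
  exact rect (i + j) j (by omega) le_rfl

/-- The `n`-th Hankel determinant of a sequence `c`. -/
noncomputable def hankel {R : Type*} [CommRing R] (c : ℕ → R) (n : ℕ) : R :=
  (Matrix.of fun i j : Fin (n + 1) => c (i.1 + j.1)).det

lemma fin_double_sum (N : ℕ) (F : ℕ → ℕ → ℚ) :
    ∑ b : Fin (N + 1), ∑ a : Fin (N + 1), F a.1 b.1
      = ∑ a ∈ range (N + 1), ∑ b ∈ range (N + 1), F a b := by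
  calc ∑ b : Fin (N + 1), ∑ a : Fin (N + 1), F a.1 b.1
      = ∑ b ∈ range (N + 1), ∑ a ∈ range (N + 1), F a b := by
        rw [← Fin.sum_univ_eq_sum_range (fun b => ∑ a ∈ range (N + 1), F a b) (N + 1)]
        exact Finset.sum_congr rfl fun b _ => Fin.sum_univ_eq_sum_range (fun a => F a b.1) (N + 1)
    _ = ∑ a ∈ range (N + 1), ∑ b ∈ range (N + 1), F a b := Finset.sum_comm

lemma hankel_binomial_shift (d : ℕ → ℚ) (t : ℚ) (n : ℕ) (c : ℕ → ℚ)
    (hc : ∀ k, c k = ∑ j ∈ range (k + 1), (k.choose j : ℚ) * d j * t ^ (k - j)) :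
    hankel c n = hankel d n := by
  set L : Matrix (Fin (n + 1)) (Fin (n + 1)) ℚ :=
    Matrix.of fun i j => (Nat.choose i.1 j.1 : ℚ) * t ^ (i.1 - j.1) with hLdef
  have htri : L.BlockTriangular OrderDual.toDual := by
    intro i j hij
    have hlt : (i : ℕ) < (j : ℕ) := hij
    simp [hLdef, Nat.choose_eq_zero_of_lt hlt]
  have hdet : L.det = 1 := by
    rw [Matrix.det_of_lowerTriangular L htri]
    simp [hLdef]
  have hmat : (Matrix.of fun i j : Fin (n + 1) => c (i.1 + j.1))
      = L * (Matrix.of fun i j : Fin (n + 1) => d (i.1 + j.1)) * Lᵀ := by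
    ext i j
    have h1 : (L * (Matrix.of fun i j : Fin (n + 1) => d (i.1 + j.1)) * Lᵀ) i j
        = ∑ b : Fin (n + 1), ∑ a : Fin (n + 1),
            (Nat.choose i.1 a.1 : ℚ) * t ^ (i.1 - a.1)
              * ((Nat.choose j.1 b.1 : ℚ) * t ^ (j.1 - b.1)) * d (a.1 + b.1) := by
      simp only [Matrix.mul_apply, Matrix.transpose_apply, Matrix.of_apply, hLdef,
        Finset.sum_mul]
      refine Finset.sum_congr rfl fun b _ => Finset.sum_congr rfl fun a _ => by ring
    show c (i.1 + j.1) = _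
    rw [h1, fin_double_sum n (fun a b => (Nat.choose i.1 a : ℚ) * t ^ (i.1 - a)
      * ((Nat.choose j.1 b : ℚ) * t ^ (j.1 - b)) * d (a + b)), hc]
    exact core_sum d t i.1 j.1 n i.is_le j.is_le
  unfold hankel
  rw [hmat, Matrix.det_mul, Matrix.det_mul, Matrix.det_transpose, hdet, one_mul, mul_one]

theorem hankel_bernoulli_sum_diff_indep (q r s : ℕ) (hq : 1 ≤ q) (hrs : r < s) (n : ℕ)
    (x y : ℚ) :
    hankel (fun k => (Polynomial.bernoulli k).eval ((x + r) / q)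
        - (Polynomial.bernoulli k).eval ((x + s) / q)) n
      = hankel (fun k => (Polynomial.bernoulli k).eval ((y + r) / q)
        - (Polynomial.bernoulli k).eval ((y + s) / q)) n ∧
    hankel (fun k => (Polynomial.bernoulli k).eval ((x + r) / q)
        + (Polynomial.bernoulli k).eval ((x + s) / q)) n
      = hankel (fun k => (Polynomial.bernoulli k).eval ((y + r) / q)
        + (Polynomial.bernoulli k).eval ((y + s) / q)) n := by
  have hq0 : (q : ℚ) ≠ 0 := Nat.cast_ne_zero.mpr (by omega)
  have hr : (x + r) / q = (y + r) / q + (x - y) / q := by field_simp; ring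
  have hs' : (x + s) / q = (y + s) / q + (x - y) / q := by field_simp; ring
  constructor
  · refine hankel_binomial_shift _ ((x - y) / q) n _ fun k => ?_
    rw [hr, hs', bernoulli_eval_add, bernoulli_eval_add, ← Finset.sum_sub_distrib]
    exact Finset.sum_congr rfl fun j _ => by ring
  · refine hankel_binomial_shift _ ((x - y) / q) n _ fun k => ?_
    rw [hr, hs', bernoulli_eval_add, bernoulli_eval_add, ← Finset.sum_add_distrib]
    exact Finset.sum_congr rfl fun j _ => by ring
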